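/- arXiv:2309.15449 — 4 statements merged into one kernel-verified Lean document; each statement's English description precedes it below -/
import Mathlib

section
/- Let (Ω, F, μ) be a probability space and let μ̂ be a finite nonnegative measure on (Ω, F). Let (F_n)_{n ∈ ℕ} be an increasing family of sub-σ-algebras of F with σ(⋃_{n ∈ ℕ} F_n) = F, and let (W_n)_{n ∈ ℕ} be a nonnegative real-valued martingale with respect to (F_n) under μ such that for every n ∈ ℕ the restriction of μ̂ to F_n has Radon–Nikodym derivative W_n with respect to the restriction of μ to F_n, i.e. for every F_n-measurable set A one has μ̂(A) = ∫_A W_n dμ. Set W := limsup_{n→∞} W_n, a [0,∞]-valued random variable. Then ∫_Ω W dμ = ∫_Ω W_0 dμ if and only if W < ∞ for μ̂-almost every ω. -/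
open MeasureTheory Filter

/-- Lemma C.2 / Lemma `lemma:durrett`, part 1:
Let `(Ω, F, μ)` be a probability space, `μ̂` a finite nonnegative measure on `(Ω, F)`,
`(ℱ n)` an increasing family of sub-σ-algebras generating `F`, and `(W n)` a nonnegative
martingale with respect to `(ℱ n)` under `μ` such that the restriction of `μ̂` to `ℱ n`
has density `W n` with respect to the restriction of `μ`.  Set `W∞ := limsup W n` (valued
in `[0,∞]`).  Then `∫ W∞ dμ = ∫ W₀ dμ` if and only if `W∞ < ∞` `μ̂`-a.e. -/
theorem spinal_durrett_dichotomy_part1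
    {Ω : Type*} {F : MeasurableSpace Ω}
    (μ μhat : Measure Ω) [IsProbabilityMeasure μ] [IsFiniteMeasure μhat]
    (ℱ : Filtration ℕ F)
    (hgen : (⨆ n, (ℱ n : MeasurableSpace Ω)) = F)
    (W : ℕ → Ω → ℝ)
    (hmart : Martingale W ℱ μ)
    (hnonneg : ∀ n ω, 0 ≤ W n ω)
    (hRN : ∀ n, ∀ A : Set Ω, MeasurableSet[ℱ n] A →
      μhat A = ∫⁻ ω in A, ENNReal.ofReal (W n ω) ∂μ)
    (Winf : Ω → ENNReal)
    (hWinf : ∀ ω, Winf ω = Filter.limsup (fun n => ENNReal.ofReal (W n ω)) Filter.atTop) :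
    (∫⁻ ω, Winf ω ∂μ = ∫⁻ ω, ENNReal.ofReal (W 0 ω) ∂μ) ↔
      (∀ᵐ ω ∂μhat, Winf ω < ⊤) := by
  classical
  set ρ : Measure Ω := μ + μhat with hρdef
  have hμρ : μ ≪ ρ := (Measure.le_add_right (le_refl μ)).absolutelyContinuous
  have hνρ : μhat ≪ ρ := (Measure.le_add_left (le_refl μhat)).absolutelyContinuous
  set g : Ω → ENNReal := μ.rnDeriv ρ with hgdef
  set h : Ω → ENNReal := μhat.rnDeriv ρ with hhdef
  have hgm : Measurable g := Measure.measurable_rnDeriv _ _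
  have hhm : Measurable h := Measure.measurable_rnDeriv _ _
  have hμd : ρ.withDensity g = μ := Measure.withDensity_rnDeriv_eq _ _ hμρ
  have hνd : ρ.withDensity h = μhat := Measure.withDensity_rnDeriv_eq _ _ hνρ
  have hsum : ∀ᵐ ω ∂ρ, g ω + h ω = 1 := by
    have h2 := Measure.rnDeriv_add μ μhat ρ
    have h1 := Measure.rnDeriv_self ρ
    have h3 : (μ + μhat).rnDeriv ρ = ρ.rnDeriv ρ := by rw [← hρdef]
    rw [h3] at h2
    filter_upwards [h2, h1] with ω h2 h1
    simp only [Pi.add_apply] at h2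
    rw [← h2, h1]
  have hglt : ∀ᵐ ω ∂ρ, g ω ≠ ⊤ := (Measure.rnDeriv_lt_top μ ρ).mono fun ω hω => hω.ne
  have hhlt : ∀ᵐ ω ∂ρ, h ω ≠ ⊤ := (Measure.rnDeriv_lt_top μhat ρ).mono fun ω hω => hω.ne
  set G : Ω → ℝ := fun ω => (g ω).toReal with hGdef
  set H : Ω → ℝ := fun ω => (h ω).toReal with hHdef
  have hGint : Integrable G ρ :=
    integrable_toReal_of_lintegral_ne_top hgm.aemeasurable
      (Measure.lintegral_rnDeriv_lt_top μ ρ).ne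
  have hHint : Integrable H ρ :=
    integrable_toReal_of_lintegral_ne_top hhm.aemeasurable
      (Measure.lintegral_rnDeriv_lt_top μhat ρ).ne
  have hGsm : StronglyMeasurable[⨆ n, (ℱ n : MeasurableSpace Ω)] G := by
    rw [hgen]; exact (hgm.ennreal_toReal).stronglyMeasurable
  have hHsm : StronglyMeasurable[⨆ n, (ℱ n : MeasurableSpace Ω)] H := by
    rw [hgen]; exact (hhm.ennreal_toReal).stronglyMeasurable
  have hGconv : ∀ᵐ ω ∂ρ, Tendsto (fun n => (ρ[G|ℱ n]) ω) atTop (nhds (G ω)) :=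
    hGint.tendsto_ae_condExp hGsm
  have hHconv : ∀ᵐ ω ∂ρ, Tendsto (fun n => (ρ[H|ℱ n]) ω) atTop (nhds (H ω)) :=
    hHint.tendsto_ae_condExp hHsm
  have hGn0 : ∀ n, 0 ≤ᵐ[ρ] ρ[G|ℱ n] := fun n =>
    condExp_nonneg (Filter.Eventually.of_forall fun ω => ENNReal.toReal_nonneg)
  have hWsm : ∀ n, StronglyMeasurable[ℱ n] (W n) := fun n => hmart.stronglyAdapted n
  have hWmeas : ∀ n, Measurable (W n) := fun n => ((hWsm n).mono (ℱ.le n)).measurable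
  -- pointwise a.e. rewriting of `ofReal (W n * G)`
  have hWGae : ∀ n, (fun ω => ENNReal.ofReal (W n ω * G ω)) =ᵐ[ρ]
      fun ω => ENNReal.ofReal (W n ω) * g ω := by
    intro n
    filter_upwards [hglt] with ω hgfin
    rw [ENNReal.ofReal_mul (hnonneg n ω), hGdef, ENNReal.ofReal_toReal hgfin]
  -- the key lintegral change of measure identity
  have hlint : ∀ n, ∀ A : Set Ω, MeasurableSet A →
      ∫⁻ ω in A, g ω * ENNReal.ofReal (W n ω) ∂ρ = ∫⁻ ω in A, ENNReal.ofReal (W n ω) ∂μ := by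
    intro n A hA
    rw [← hμd, restrict_withDensity hA,
      lintegral_withDensity_eq_lintegral_mul _ hgm
        (hWmeas n).ennreal_ofReal]
    rfl
  -- integrability of `W n * G` w.r.t. ρ
  have hWG_int : ∀ n, Integrable (fun ω => W n ω * G ω) ρ := by
    intro n
    have hmeas : Measurable fun ω => ENNReal.ofReal (W n ω) * g ω :=
      (hWmeas n).ennreal_ofReal.mul hgm
    have hfin : ∫⁻ ω, ENNReal.ofReal (W n ω) * g ω ∂ρ ≠ ⊤ := by
      have h1 : ∫⁻ ω, ENNReal.ofReal (W n ω) * g ω ∂ρ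
          = ∫⁻ ω, g ω * ENNReal.ofReal (W n ω) ∂ρ := by
        apply lintegral_congr fun ω => mul_comm _ _
      have h2 := hlint n Set.univ MeasurableSet.univ
      rw [Measure.restrict_univ, Measure.restrict_univ] at h2
      have h3 := hRN n Set.univ MeasurableSet.univ
      rw [Measure.restrict_univ] at h3
      rw [h1, h2, ← h3]
      exact measure_ne_top _ _
    have hint : Integrable (fun ω => (ENNReal.ofReal (W n ω) * g ω).toReal) ρ :=
      integrable_toReal_of_lintegral_ne_top hmeas.aemeasurable hfin
    apply hint.congr
    filter_upwards [hglt] with ω hgfin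
    rw [ENNReal.toReal_mul, ENNReal.toReal_ofReal (hnonneg n ω)]
  -- key identity : `W n * ρ[G|ℱ n] = ρ[H|ℱ n]` a.e.
  have hkey : ∀ n, (fun ω => W n ω * (ρ[G|ℱ n]) ω) =ᵐ[ρ] ρ[H|ℱ n] := by
    intro n
    have hce : ρ[(fun ω => W n ω * G ω)|ℱ n] =ᵐ[ρ] fun ω => W n ω * (ρ[G|ℱ n]) ω :=
      condExp_mul_of_stronglyMeasurable_left (hWsm n) (hWG_int n) hGint
    have hmulint : Integrable (fun ω => W n ω * (ρ[G|ℱ n]) ω) ρ :=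
      integrable_condExp.congr hce
    refine ae_eq_condExp_of_forall_setIntegral_eq (ℱ.le n) hHint
      (fun s _ _ => hmulint.integrableOn) (fun s hs _ => ?_)
      (((hWsm n).mul stronglyMeasurable_condExp).aestronglyMeasurable)
    have hsF : MeasurableSet s := ℱ.le n _ hs
    have e1 : ∫ ω in s, W n ω * (ρ[G|ℱ n]) ω ∂ρ = ∫ ω in s, W n ω * G ω ∂ρ := by
      rw [← setIntegral_condExp (ℱ.le n) (hWG_int n) hs]
      exact setIntegral_congr_ae hsF (hce.mono fun ω hω _ => hω.symm)
    have e2 : ∫ ω in s, W n ω * G ω ∂ρ = (μhat s).toReal := by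
      rw [integral_eq_lintegral_of_nonneg_ae
        (Filter.Eventually.of_forall fun ω => mul_nonneg (hnonneg n ω) ENNReal.toReal_nonneg)
        ((hWmeas n).mul hgm.ennreal_toReal).aestronglyMeasurable.restrict]
      congr 1
      calc ∫⁻ ω in s, ENNReal.ofReal (W n ω * G ω) ∂ρ
          = ∫⁻ ω in s, ENNReal.ofReal (W n ω) * g ω ∂ρ :=
            lintegral_congr_ae (ae_restrict_of_ae (hWGae n))
        _ = ∫⁻ ω in s, g ω * ENNReal.ofReal (W n ω) ∂ρ :=
            lintegral_congr fun ω => mul_comm _ _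
        _ = ∫⁻ ω in s, ENNReal.ofReal (W n ω) ∂μ := hlint n s hsF
        _ = μhat s := (hRN n s hs).symm
    have e3 : ∫ ω in s, H ω ∂ρ = (μhat s).toReal := by
      rw [integral_toReal (hhm.aemeasurable.restrict)
        (ae_restrict_of_ae ((Measure.rnDeriv_lt_top μhat ρ)))]
      congr 1
      rw [← hνd, withDensity_apply _ hsF]
    rw [e1, e2, e3]
  -- the main a.e. identification of `Winf`
  have hmain : ∀ᵐ ω ∂ρ, Winf ω = h ω / g ω := by
    have hkeyall : ∀ᵐ ω ∂ρ, ∀ n, W n ω * (ρ[G|ℱ n]) ω = (ρ[H|ℱ n]) ω := ae_all_iff.2 hkey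
    have hGn0all : ∀ᵐ ω ∂ρ, ∀ n, 0 ≤ (ρ[G|ℱ n]) ω := ae_all_iff.2 hGn0
    filter_upwards [hkeyall, hGn0all, hGconv, hHconv, hsum, hglt, hhlt] with ω hrel hpos hGc hHc
      hs hgfin hhfin
    rw [hWinf ω]
    by_cases hg0 : g ω = 0
    · have hH1 : h ω = 1 := by rwa [hg0, zero_add] at hs
      have hGr : G ω = 0 := by simp [hGdef, hg0]
      have hHr : H ω = 1 := by simp [hHdef, hH1]
      have hWtend : Tendsto (fun n => W n ω) atTop atTop := by
        rw [tendsto_atTop]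
        intro b
        set M : ℝ := max b 1 with hMdef
        have hM : 0 < M := lt_of_lt_of_le one_pos (le_max_right _ _)
        have h1 : ∀ᶠ n in atTop, (ρ[G|ℱ n]) ω < 1 / (2 * M) := by
          rw [hGr] at hGc
          exact hGc.eventually_lt_const (by positivity)
        have h2 : ∀ᶠ n in atTop, (1 : ℝ) / 2 < (ρ[H|ℱ n]) ω := by
          rw [hHr] at hHc
          exact hHc.eventually_const_lt (by norm_num)
        filter_upwards [h1, h2] with n h1 h2
        have hrel' := hrel n
        have hb : b ≤ M := le_max_left _ _
        by_contra hcon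
        push_neg at hcon
        have h8 : W n ω * (ρ[G|ℱ n]) ω ≤ M * (ρ[G|ℱ n]) ω :=
          mul_le_mul_of_nonneg_right (le_of_lt (lt_of_lt_of_le hcon hb)) (hpos n)
        have h9 : M * (ρ[G|ℱ n]) ω < M * (1 / (2 * M)) := (mul_lt_mul_iff_right₀ hM).2 h1
        have h10 : M * (1 / (2 * M)) = 1 / 2 := by field_simp
        linarith [hrel']
      have htend : Tendsto (fun n => ENNReal.ofReal (W n ω)) atTop (nhds ⊤) :=
        ENNReal.tendsto_ofReal_atTop.comp hWtend
      rw [htend.limsup_eq, hH1, hg0, ENNReal.div_zero one_ne_zero]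
    · have hGpos : 0 < G ω := ENNReal.toReal_pos hg0 hgfin
      have hWt : Tendsto (fun n => W n ω) atTop (nhds (H ω / G ω)) := by
        have hdiv : Tendsto (fun n => (ρ[H|ℱ n]) ω / (ρ[G|ℱ n]) ω) atTop
            (nhds (H ω / G ω)) := hHc.div hGc hGpos.ne'
        refine hdiv.congr' ?_
        filter_upwards [hGc.eventually_const_lt hGpos] with n hn
        rw [← hrel n, mul_div_assoc, div_self hn.ne', mul_one]
      have htend : Tendsto (fun n => ENNReal.ofReal (W n ω)) atTop
          (nhds (ENNReal.ofReal (H ω / G ω))) := ENNReal.tendsto_ofReal hWt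
      rw [htend.limsup_eq, ENNReal.ofReal_div_of_pos hGpos, hGdef, hHdef,
        ENNReal.ofReal_toReal hgfin, ENNReal.ofReal_toReal hhfin]
  -- transfer to μ and μhat
  have hWinfμ : ∀ᵐ ω ∂μ, Winf ω = h ω / g ω := hμρ.ae_le hmain
  have hWinfν : ∀ᵐ ω ∂μhat, Winf ω = h ω / g ω := hνρ.ae_le hmain
  set T : Set Ω := {ω | g ω = 0} with hTdef
  have hT : MeasurableSet T := hgm (measurableSet_singleton 0)
  -- the integral of Winf
  have hIint : ∫⁻ ω, Winf ω ∂μ = μhat Tᶜ := by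
    calc ∫⁻ ω, Winf ω ∂μ = ∫⁻ ω, h ω / g ω ∂μ := lintegral_congr_ae hWinfμ
      _ = ∫⁻ ω, g ω * (h ω / g ω) ∂ρ := by
          rw [← hμd, lintegral_withDensity_eq_lintegral_mul _ hgm (g := fun ω => h ω / g ω) (hhm.div hgm)]
          rfl
      _ = ∫⁻ ω, Tᶜ.indicator h ω ∂ρ := by
          apply lintegral_congr_ae
          filter_upwards [hglt] with ω hgfin
          by_cases hg0 : g ω = 0
          · simp [Set.indicator, hTdef, hg0]
          · rw [ENNReal.mul_div_cancel hg0 hgfin,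
              Set.indicator_of_mem (by simpa [hTdef] using hg0)]
      _ = ∫⁻ ω in Tᶜ, h ω ∂ρ := lintegral_indicator hT.compl h
      _ = μhat Tᶜ := by rw [← hνd, withDensity_apply _ hT.compl]
  have hBase : ∫⁻ ω, ENNReal.ofReal (W 0 ω) ∂μ = μhat Set.univ := by
    rw [← setLIntegral_univ]
    exact (hRN 0 Set.univ MeasurableSet.univ).symm
  have hsplit : μhat Set.univ = μhat T + μhat Tᶜ := (measure_add_measure_compl hT).symm
  have hTinf : μhat {ω | Winf ω = ⊤} = μhat T := by
    apply measure_congr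
    have hsumν : ∀ᵐ ω ∂μhat, g ω + h ω = 1 := hνρ.ae_le hsum
    have hgltν : ∀ᵐ ω ∂μhat, g ω ≠ ⊤ := hνρ.ae_le hglt
    have hhltν : ∀ᵐ ω ∂μhat, h ω ≠ ⊤ := hνρ.ae_le hhlt
    rw [Filter.eventuallyEq_set]
    filter_upwards [hWinfν, hsumν, hgltν, hhltν] with ω hWω hsω hgω hhω
    simp only [Set.mem_setOf_eq, hTdef]
    rw [hWω]
    constructor
    · intro htop
      by_contra hg0
      rw [ENNReal.div_eq_top] at htop
      rcases htop with ⟨_, h2⟩ | ⟨h1, _⟩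
      · exact hg0 h2
      · exact hhω h1
    · intro hg0
      have hH1 : h ω = 1 := by rwa [hg0, zero_add] at hsω
      rw [hg0, hH1, ENNReal.div_zero one_ne_zero]
  have hae : (∀ᵐ ω ∂μhat, Winf ω < ⊤) ↔ μhat {ω | Winf ω = ⊤} = 0 := by
    rw [ae_iff]
    simp only [not_lt, top_le_iff]
  rw [hIint, hBase, hsplit, hae, hTinf]
  constructor
  · intro hEq
    have h2 : μhat Tᶜ + μhat T = μhat Tᶜ + 0 := by
      rw [add_zero, add_comm]; exact hEq.symm
    exact (ENNReal.add_right_inj (measure_ne_top _ _)).1 h2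
  · intro h0
    rw [h0, zero_add]
end

section
/- Let (Ω, F, μ) be a probability space and let μ̂ be a finite nonnegative measure on (Ω, F). Let (F_n)_{n ∈ ℕ} be an increasing family of sub-σ-algebras of F with σ(⋃_{n ∈ ℕ} F_n) = F, and let (W_n)_{n ∈ ℕ} be a nonnegative real-valued martingale with respect to (F_n) under μ such that for every n ∈ ℕ the restriction of μ̂ to F_n has Radon–Nikodym derivative W_n with respect to the restriction of μ to F_n, i.e. for every F_n-measurable set A one has μ̂(A) = ∫_A W_n dμ. Set W := limsup_{n→∞} W_n, a [0,∞]-valued random variable. Then W = 0 for μ-almost every ω if and only if W = ∞ for μ̂-almost every ω. -/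
open MeasureTheory Filter Topology

/-- Lemma C.2 / Lemma `lemma:durrett`, part 1:
Let `(Ω, F, μ)` be a probability space, `μ̂` a finite nonnegative measure on `(Ω, F)`,
`(ℱ n)` an increasing family of sub-σ-algebras generating `F`, and `(W n)` a nonnegative
martingale with respect to `(ℱ n)` under `μ` such that the restriction of `μ̂` to `ℱ n`
has density `W n` with respect to the restriction of `μ`.  Set `W∞ := limsup W n` (valued
in `[0,∞]`).  Then `W∞ = 0` `μ`-a.e. if and only if `W∞ = ∞` `μ̂`-a.e. -/
theorem spinal_durrett_dichotomy_part2
    {Ω : Type*} {F : MeasurableSpace Ω}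
    (μ μhat : Measure Ω) [IsProbabilityMeasure μ] [IsFiniteMeasure μhat]
    (ℱ : Filtration ℕ F)
    (hgen : (⨆ n, (ℱ n : MeasurableSpace Ω)) = F)
    (W : ℕ → Ω → ℝ)
    (hmart : Martingale W ℱ μ)
    (hnonneg : ∀ n ω, 0 ≤ W n ω)
    (hRN : ∀ n, ∀ A : Set Ω, MeasurableSet[ℱ n] A →
      μhat A = ∫⁻ ω in A, ENNReal.ofReal (W n ω) ∂μ)
    (Winf : Ω → ENNReal)
    (hWinf : ∀ ω, Winf ω = Filter.limsup (fun n => ENNReal.ofReal (W n ω)) Filter.atTop) :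
    (∀ᵐ ω ∂μ, Winf ω = 0) ↔
      (∀ᵐ ω ∂μhat, Winf ω = ⊤) := by
  classical
  set ρ : Measure Ω := μ + μhat with hρ
  have hμle : μ ≪ ρ := Measure.absolutelyContinuous_of_le (Measure.le_add_right le_rfl)
  have hμhatle : μhat ≪ ρ := Measure.absolutelyContinuous_of_le (Measure.le_add_left le_rfl)
  set M : ℕ → Ω → ℝ := fun n ω => W n ω / (1 + W n ω) with hM
  have hWpos : ∀ n ω, (0:ℝ) < 1 + W n ω := fun n ω => by linarith [hnonneg n ω]
  have hM0 : ∀ n ω, 0 ≤ M n ω := fun n ω => div_nonneg (hnonneg n ω) (hWpos n ω).le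
  have hM1 : ∀ n ω, M n ω < 1 := fun n ω => by
    rw [hM, div_lt_one (hWpos n ω)]; linarith [hnonneg n ω]
  have hMadp : StronglyAdapted ℱ M := fun n =>
    ((hmart.stronglyAdapted n).measurable.div
      (measurable_const.add (hmart.stronglyAdapted n).measurable)).stronglyMeasurable
  have hMW : ∀ n ω, M n ω / (1 - M n ω) = W n ω := by
    intro n ω
    have h1 : (1 + W n ω) ≠ 0 := (hWpos n ω).ne'
    simp only [hM]
    field_simp
    ring
  have hMint : ∀ n, Integrable (M n) ρ := fun n =>
    ⟨((hMadp n).mono (ℱ.le n)).aestronglyMeasurable,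
      (hasFiniteIntegral_const (1:ℝ)).mono' (ae_of_all _ fun ω => by
        rw [Real.norm_eq_abs, abs_of_nonneg (hM0 n ω)]; exact (hM1 n ω).le)⟩
  -- key identity: for A ∈ ℱ n, ∫⁻_A ofReal (M n) dρ = μhat A
  have hkey : ∀ n (A : Set Ω), MeasurableSet[ℱ n] A →
      ∫⁻ ω in A, ENNReal.ofReal (M n ω) ∂ρ = μhat A := by
    intro n A hA
    have hAm : MeasurableSet A := ℱ.le n A hA
    have hMm : Measurable[ℱ n] fun ω => ENNReal.ofReal (M n ω) :=
      ENNReal.measurable_ofReal.comp (hMadp n).measurable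
    have hWm : Measurable[ℱ n] fun ω => ENNReal.ofReal (W n ω) :=
      ENNReal.measurable_ofReal.comp (hmart.stronglyAdapted n).measurable
    set ν : Measure Ω := μ.withDensity fun ω => ENNReal.ofReal (W n ω) with hν
    have htrim : μhat.trim (ℱ.le n) = ν.trim (ℱ.le n) := by
      refine @Measure.ext Ω (ℱ n) _ _ fun s hs => ?_
      rw [trim_measurableSet_eq _ hs, trim_measurableSet_eq _ hs, hRN n s hs, hν,
        withDensity_apply _ (ℱ.le n s hs)]
    have hind : Measurable[ℱ n] (A.indicator fun ω => ENNReal.ofReal (M n ω)) :=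
      hMm.indicator hA
    have hhat : ∫⁻ ω in A, ENNReal.ofReal (M n ω) ∂μhat
        = ∫⁻ ω in A, ENNReal.ofReal (W n ω) * ENNReal.ofReal (M n ω) ∂μ := by
      rw [← lintegral_indicator hAm _, ← lintegral_trim (ℱ.le n) hind, htrim,
        lintegral_trim (ℱ.le n) hind, lintegral_indicator hAm _, hν,
        restrict_withDensity hAm,
        lintegral_withDensity_eq_lintegral_mul _ (hWm.mono (ℱ.le n) le_rfl)
          (hMm.mono (ℱ.le n) le_rfl)]
      rfl
    have hpt : ∀ ω, ENNReal.ofReal (M n ω) + ENNReal.ofReal (W n ω) * ENNReal.ofReal (M n ω)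
        = ENNReal.ofReal (W n ω) := by
      intro ω
      rw [← ENNReal.ofReal_mul (hnonneg n ω),
        ← ENNReal.ofReal_add (hM0 n ω) (mul_nonneg (hnonneg n ω) (hM0 n ω))]
      congr 1
      have h1 : (1 + W n ω) ≠ 0 := (hWpos n ω).ne'
      rw [hM]
      field_simp
    rw [hρ, Measure.restrict_add, lintegral_add_measure, hhat,
      ← lintegral_add_left (hMm.mono (ℱ.le n) le_rfl)]
    exact (lintegral_congr fun ω => hpt ω).trans (hRN n A hA).symm
  have hkeyR : ∀ n (A : Set Ω), MeasurableSet[ℱ n] A →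
      ∫ ω in A, M n ω ∂ρ = (μhat A).toReal := by
    intro n A hA
    rw [integral_eq_lintegral_of_nonneg_ae (ae_of_all _ fun ω => hM0 n ω)
      (((hMadp n).mono (ℱ.le n)).aestronglyMeasurable.restrict), hkey n A hA]
  have hMmart : Martingale M ℱ ρ :=
    martingale_of_setIntegral_eq_succ hMadp hMint fun i s hs => by
      rw [hkeyR i s hs, hkeyR (i+1) s (ℱ.mono (Nat.le_succ i) s hs)]
  set R : NNReal := (ρ Set.univ).toNNReal with hR
  have hbdd : ∀ n, eLpNorm (M n) 1 ρ ≤ R := by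
    intro n
    have h1 : eLpNorm (M n) 1 ρ ≤ ρ Set.univ := by
      rw [eLpNorm_one_eq_lintegral_enorm]
      have hb : ∀ ω, (‖M n ω‖₊ : ENNReal) ≤ 1 := by
        intro ω
        rw [ENNReal.coe_le_one_iff]
        have hle : ‖M n ω‖ ≤ 1 := by
          rw [Real.norm_eq_abs, abs_of_nonneg (hM0 n ω)]; exact (hM1 n ω).le
        exact_mod_cast hle
      calc ∫⁻ ω, (‖M n ω‖₊ : ENNReal) ∂ρ ≤ ∫⁻ _, 1 ∂ρ := lintegral_mono hb
        _ = ρ Set.univ := lintegral_one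
    rwa [hR, ENNReal.coe_toNNReal (measure_ne_top ρ _)]
  set L : Ω → ℝ := ℱ.limitProcess M ρ with hL
  have hconv : ∀ᵐ ω ∂ρ, Tendsto (fun n => M n ω) atTop (𝓝 (L ω)) :=
    hMmart.submartingale.ae_tendsto_limitProcess hbdd
  have hLmeas : StronglyMeasurable L :=
    (Filtration.stronglyMeasurable_limitProcess).mono (le_of_eq hgen)
  set X : Ω → ENNReal := fun ω => ENNReal.ofReal (L ω) with hX
  have hXmeas : Measurable X := ENNReal.measurable_ofReal.comp hLmeas.measurable
  have hXlt : ∀ ω, X ω ≠ ⊤ := fun ω => ENNReal.ofReal_ne_top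
  have hX1 : ∀ᵐ ω ∂ρ, X ω ≤ 1 := by
    filter_upwards [hconv] with ω hω
    have hL1 : L ω ≤ 1 := le_of_tendsto hω (Eventually.of_forall fun n => (hM1 n ω).le)
    exact ENNReal.ofReal_le_one.2 hL1
  -- identification of μhat
  have hAgree : ∀ (A : Set Ω), (∃ n, MeasurableSet[ℱ n] A) →
      ∫⁻ ω in A, X ω ∂ρ = μhat A := by
    rintro A ⟨n, hA⟩
    have h1 : Tendsto (fun m => ∫⁻ ω in A, ENNReal.ofReal (M m ω) ∂ρ) atTop
        (𝓝 (∫⁻ ω in A, X ω ∂ρ)) := by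
      refine tendsto_lintegral_of_dominated_convergence (fun _ => 1)
        (fun m => ENNReal.measurable_ofReal.comp ((hMadp m).mono (ℱ.le m)).measurable)
        (fun m => ae_of_all _ fun ω => ENNReal.ofReal_le_one.2 (hM1 m ω).le)
        (by simp) ?_
      refine ae_restrict_of_ae ?_
      filter_upwards [hconv] with ω hω
      exact (ENNReal.continuous_ofReal.tendsto _).comp hω
    have h2 : Tendsto (fun m => ∫⁻ ω in A, ENNReal.ofReal (M m ω) ∂ρ) atTop (𝓝 (μhat A)) := by
      refine tendsto_const_nhds.congr' ?_
      filter_upwards [eventually_ge_atTop n] with m hm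
      exact (hkey m A (ℱ.mono hm A hA)).symm
    exact tendsto_nhds_unique h1 h2
  have hfinX : IsFiniteMeasure (ρ.withDensity X) := by
    constructor
    rw [withDensity_apply _ MeasurableSet.univ, Measure.restrict_univ]
    calc ∫⁻ ω, X ω ∂ρ ≤ ∫⁻ _, 1 ∂ρ := lintegral_mono_ae hX1
      _ = ρ Set.univ := lintegral_one
      _ < ⊤ := measure_lt_top _ _
  have hident : ρ.withDensity X = μhat := by
    have hgen2 : F = MeasurableSpace.generateFrom {s : Set Ω | ∃ n, MeasurableSet[ℱ n] s} :=
      hgen.symm.trans (MeasurableSpace.measurableSpace_iSup_eq fun n => (ℱ n : MeasurableSpace Ω))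
    refine ext_of_generate_finite _ hgen2 ?_ ?_ ?_
    · rintro s ⟨n, hs⟩ t ⟨m, ht⟩ -
      rcases le_total n m with h | h
      exacts [⟨m, (ℱ.mono h _ hs).inter ht⟩, ⟨n, hs.inter (ℱ.mono h _ ht)⟩]
    · rintro s ⟨n, hs⟩
      rw [withDensity_apply _ (ℱ.le n s hs)]
      exact hAgree s ⟨n, hs⟩
    · rw [withDensity_apply _ MeasurableSet.univ]
      exact hAgree Set.univ ⟨0, MeasurableSet.univ⟩
  -- dichotomy: ρ-a.e., Winf = 0 ↔ X = 0 and Winf = ⊤ ↔ X = 1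
  have hdich : ∀ᵐ ω ∂ρ, (Winf ω = 0 ↔ X ω = 0) ∧ (Winf ω = ⊤ ↔ X ω = 1) := by
    filter_upwards [hconv, hX1] with ω hω hX1ω
    have hL0 : 0 ≤ L ω := ge_of_tendsto hω (Eventually.of_forall fun n => hM0 n ω)
    have hL1 : L ω ≤ 1 := ENNReal.ofReal_le_one.1 hX1ω
    rcases lt_or_eq_of_le hL1 with hlt | heq
    · -- finite limit case
      have hWt : Tendsto (fun n => W n ω) atTop (𝓝 (L ω / (1 - L ω))) := by
        have hden : Tendsto (fun n => 1 - M n ω) atTop (𝓝 (1 - L ω)) :=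
          tendsto_const_nhds.sub hω
        have h2 := hω.div hden (by intro h; nlinarith : (1:ℝ) - L ω ≠ 0)
        exact h2.congr fun n => hMW n ω
      have hWinft : Tendsto (fun n => ENNReal.ofReal (W n ω)) atTop
          (𝓝 (ENNReal.ofReal (L ω / (1 - L ω)))) :=
        (ENNReal.continuous_ofReal.tendsto _).comp hWt
      have hlim : Winf ω = ENNReal.ofReal (L ω / (1 - L ω)) := by
        rw [hWinf ω]; exact hWinft.limsup_eq
      have hdpos : (0:ℝ) < 1 - L ω := by linarith
      constructor
      · rw [hlim, hX, ENNReal.ofReal_eq_zero, ENNReal.ofReal_eq_zero]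
        constructor
        · intro h
          have := (div_nonpos_iff.1 h)
          rcases this with ⟨h1, h2⟩ | ⟨h1, h2⟩
          · linarith
          · exact h1
        · intro h
          exact div_nonpos_of_nonpos_of_nonneg h hdpos.le
      · constructor
        · intro h; exact absurd h (by rw [hlim]; exact ENNReal.ofReal_ne_top)
        · intro h; exact absurd h (ne_of_lt (by rw [hX]; exact ENNReal.ofReal_lt_one.2 hlt))
    · -- L ω = 1 : W n ω → ∞
      have hden : Tendsto (fun n => 1 - M n ω) atTop (𝓝[>] (0:ℝ)) := by
        refine tendsto_nhdsWithin_of_tendsto_nhds_of_eventually_within _ ?_ ?_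
        · have h0 : Tendsto (fun n => 1 - M n ω) atTop (𝓝 (1 - L ω)) :=
            tendsto_const_nhds.sub hω
          rw [heq, sub_self] at h0
          exact h0
        · exact Eventually.of_forall fun n => by
            simp only [Set.mem_Ioi, sub_pos]; exact hM1 n ω
      have hinv : Tendsto (fun n => (1 - M n ω)⁻¹) atTop atTop :=
        tendsto_inv_nhdsGT_zero.comp hden
      have hWt : Tendsto (fun n => W n ω) atTop atTop := by
        have h2 : Tendsto (fun n => M n ω * (1 - M n ω)⁻¹) atTop atTop :=
          Tendsto.pos_mul_atTop (by norm_num : (0:ℝ) < 1) (by rw [← heq]; exact hω) hinv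
        refine h2.congr fun n => ?_
        rw [← div_eq_mul_inv]
        exact hMW n ω
      have hWinft : Tendsto (fun n => ENNReal.ofReal (W n ω)) atTop (𝓝 ⊤) :=
        ENNReal.tendsto_ofReal_atTop.comp hWt
      have hlim : Winf ω = ⊤ := by rw [hWinf ω]; exact hWinft.limsup_eq
      constructor
      · simp [hlim, hX, heq]
      · simp [hlim, hX, heq]
  -- transfer to μ and μhat
  have hdichμ : ∀ᵐ ω ∂μ, (Winf ω = 0 ↔ X ω = 0) ∧ (Winf ω = ⊤ ↔ X ω = 1) :=
    hdich.filter_mono hμle.ae_le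
  have hdichμhat : ∀ᵐ ω ∂μhat, (Winf ω = 0 ↔ X ω = 0) ∧ (Winf ω = ⊤ ↔ X ω = 1) :=
    hdich.filter_mono hμhatle.ae_le
  have e1 : (∀ᵐ ω ∂μ, Winf ω = 0) ↔ (∀ᵐ ω ∂μ, X ω = 0) := by
    constructor <;> intro h' <;> filter_upwards [hdichμ, h'] with ω hω h'ω
    exacts [hω.1.mp h'ω, hω.1.mpr h'ω]
  have e2 : (∀ᵐ ω ∂μ, X ω = 0) ↔ ∫⁻ ω, X ω ∂μ = 0 := by
    rw [lintegral_eq_zero_iff hXmeas]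
    constructor
    · intro h; filter_upwards [h] with ω hω; simp [hω]
    · intro h; filter_upwards [h] with ω hω; simpa using hω
  -- integral identities
  have hXfin : ∫⁻ ω, X ω ∂ρ ≠ ⊤ := by
    refine ne_top_of_le_ne_top (measure_ne_top ρ Set.univ) ?_
    calc ∫⁻ ω, X ω ∂ρ ≤ ∫⁻ _, 1 ∂ρ := lintegral_mono_ae hX1
      _ = ρ Set.univ := lintegral_one
  have hXXle : ∀ᵐ ω ∂ρ, X ω * X ω ≤ X ω := by
    filter_upwards [hX1] with ω hω
    calc X ω * X ω ≤ X ω * 1 := mul_le_mul_right hω _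
      _ = X ω := mul_one _
  have hXXfin : ∫⁻ ω, X ω * X ω ∂ρ ≠ ⊤ :=
    ne_top_of_le_ne_top hXfin (lintegral_mono_ae hXXle)
  have hXhat : ∫⁻ ω, X ω ∂μhat = ∫⁻ ω, X ω * X ω ∂ρ := by
    rw [← hident, lintegral_withDensity_eq_lintegral_mul _ hXmeas hXmeas]
    rfl
  have h1mXhat : ∫⁻ ω, (1 - X ω) ∂μhat = ∫⁻ ω, X ω * (1 - X ω) ∂ρ := by
    rw [← hident, lintegral_withDensity_eq_lintegral_mul _ hXmeas
      (show Measurable fun ω => 1 - X ω from measurable_const.sub hXmeas)]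
    rfl
  have hsub : ∫⁻ ω, X ω * (1 - X ω) ∂ρ = ∫⁻ ω, X ω ∂ρ - ∫⁻ ω, X ω * X ω ∂ρ := by
    rw [← lintegral_sub (show Measurable fun ω => X ω * X ω from hXmeas.mul hXmeas) hXXfin hXXle]
    refine lintegral_congr_ae ?_
    filter_upwards [hX1] with ω hω
    rw [ENNReal.mul_sub (fun _ _ => hXlt ω), mul_one]
  have hXμ : ∫⁻ ω, X ω ∂μ = ∫⁻ ω, X ω * (1 - X ω) ∂ρ := by
    have hsplit : ∫⁻ ω, X ω ∂μ + ∫⁻ ω, X ω ∂μhat = ∫⁻ ω, X ω ∂ρ := by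
      rw [hρ, lintegral_add_measure]
    rw [hsub, ← hsplit, hXhat, ENNReal.add_sub_cancel_right hXXfin]
  have e3 : (∫⁻ ω, X ω ∂μ = 0) ↔ (∫⁻ ω, (1 - X ω) ∂μhat = 0) := by
    rw [hXμ, h1mXhat]
  have e4 : (∫⁻ ω, (1 - X ω) ∂μhat = 0) ↔ (∀ᵐ ω ∂μhat, X ω = 1) := by
    rw [lintegral_eq_zero_iff (show Measurable fun ω => 1 - X ω from measurable_const.sub hXmeas)]
    have hX1' : ∀ᵐ ω ∂μhat, X ω ≤ 1 := hX1.filter_mono hμhatle.ae_le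
    constructor
    · intro h; filter_upwards [h, hX1'] with ω h1 h2
      have : (1:ENNReal) - X ω = 0 := by simpa using h1
      exact le_antisymm h2 (tsub_eq_zero_iff_le.1 this)
    · intro h; filter_upwards [h] with ω h1; simp [h1]
  have e5 : (∀ᵐ ω ∂μhat, X ω = 1) ↔ (∀ᵐ ω ∂μhat, Winf ω = ⊤) := by
    constructor <;> intro h' <;> filter_upwards [hdichμhat, h'] with ω hω h'ω
    exacts [hω.2.mpr h'ω, hω.2.mp h'ω]
  exact e1.trans (e2.trans (e3.trans (e4.trans e5)))
end

section
/- Let B̄ > 0 and c > 0. Let (S_k)_{k ∈ ℕ} be a sequence of independent, identically distributed random variables, each exponentially distributed with rate B̄ (i.e. with law having density s ↦ B̄ e^{−B̄ s} on [0,∞) with respect to Lebesgue measure), and set T_i := Σ_{k=0}^{i} S_k. Let (N_i)_{i ∈ ℕ} be a sequence of identically distributed random variables on the same probability space, each taking values in [1, ∞), with E[log N_0] < ∞. Then the series Σ_{i=0}^{∞} N_i e^{−c T_i} converges (is finite) almost surely. -/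
set_option maxHeartbeats 1000000


open MeasureTheory Filter ProbabilityTheory Topology

/-- let `(S k)` be i.i.d. exponential random variables of rate `B̄ > 0`,
`T i := ∑_{k=0}^{i} S k`, and let `(N i)` be identically distributed `[1,∞)`-valued
random variables on the same probability space with `E[log N₀] < ∞`.  Then for every
`c > 0` the series `∑ i, N i * exp (-c * T i)` converges almost surely. -/
theorem summable_biased_immigration_series
    {Ω : Type*} [MeasurableSpace Ω] (μ : Measure Ω) [IsProbabilityMeasure μ]
    (Bbar c : ℝ) (hB : 0 < Bbar) (hc : 0 < c)
    (S : ℕ → Ω → ℝ)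
    (hSmeas : ∀ k, Measurable (S k))
    (hSindep : iIndepFun S μ)
    (hSlaw : ∀ k, Measure.map (S k) μ =
      (volume : Measure ℝ).withDensity
        (fun s => ENNReal.ofReal (if 0 ≤ s then Bbar * Real.exp (-(Bbar * s)) else 0)))
    (T : ℕ → Ω → ℝ)
    (hT : ∀ i ω, T i ω = ∑ k ∈ Finset.range (i + 1), S k ω)
    (N : ℕ → Ω → ℝ)
    (hNident : ∀ i, IdentDistrib (N i) (N 0) μ μ)
    (hNge : ∀ i ω, 1 ≤ N i ω)
    (hNint : Integrable (fun ω => Real.log (N 0 ω)) μ) :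
    ∀ᵐ ω ∂μ, Summable (fun i : ℕ => N i ω * Real.exp (-(c * T i ω))) := by
  -- the truncation map
  set φ : ℝ → ℝ := fun x => min (max x 0) 1 with hφ
  have hφmeas : Measurable φ := (measurable_id.max measurable_const).min measurable_const
  have hφ01 : ∀ x, 0 ≤ φ x ∧ φ x ≤ 1 := fun x =>
    ⟨le_min (le_max_right _ _) zero_le_one, min_le_right _ _⟩
  have hφle : ∀ x : ℝ, 0 ≤ x → φ x ≤ x := fun x hx => by
    simp only [hφ, max_eq_left hx]
    exact min_le_left _ _
  set S' : ℕ → Ω → ℝ := fun k ω => φ (S k ω) with hS'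
  have hS'meas : ∀ k, Measurable (S' k) := fun k => hφmeas.comp (hSmeas k)
  -- S k is a.e. nonnegative
  have hIio : ∀ k, μ (S k ⁻¹' Set.Iio 0) = 0 := by
    intro k
    rw [← Measure.map_apply (hSmeas k) measurableSet_Iio, hSlaw k,
      withDensity_apply _ measurableSet_Iio]
    have h0 : ∀ s ∈ Set.Iio (0:ℝ),
        ENNReal.ofReal (if 0 ≤ s then Bbar * Real.exp (-(Bbar * s)) else 0) = 0 := by
      intro s hs
      simp [not_le.mpr (Set.mem_Iio.mp hs)]
    rw [setLIntegral_congr_fun_ae measurableSet_Iio (ae_of_all _ h0)]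
    simp
  have hSnonneg : ∀ k, ∀ᵐ ω ∂μ, 0 ≤ S k ω := by
    intro k
    have h1 : μ {ω | ¬ (0 ≤ S k ω)} = 0 := by
      have : {ω | ¬ (0 ≤ S k ω)} = S k ⁻¹' Set.Iio 0 := by
        ext ω; simp [not_le]
      rw [this]; exact hIio k
    exact h1
  -- identical distribution of S'
  have hSident : ∀ k, IdentDistrib (S k) (S 0) μ μ := fun k =>
    ⟨(hSmeas k).aemeasurable, (hSmeas 0).aemeasurable, by rw [hSlaw k, hSlaw 0]⟩
  have hS'ident : ∀ k, IdentDistrib (S' k) (S' 0) μ μ := fun k =>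
    (hSident k).comp hφmeas
  -- pairwise independence of S'
  have hS'indep : Pairwise (Function.onFun (IndepFun · · μ) S') := fun i j hij =>
    (hSindep.indepFun hij).comp hφmeas hφmeas
  -- integrability of S' 0
  have hS'int : Integrable (S' 0) μ := by
    refine (integrable_const (1:ℝ)).mono' (hS'meas 0).aestronglyMeasurable ?_
    refine ae_of_all _ fun ω => ?_
    rw [Real.norm_eq_abs, abs_of_nonneg (hφ01 _).1]
    exact (hφ01 _).2
  -- the mean of S' 0 is positive
  set m : ℝ := ∫ ω, S' 0 ω ∂μ with hm
  have hmpos : 0 < m := by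
    rw [hm, integral_pos_iff_support_of_nonneg (fun ω => (hφ01 (S 0 ω)).1) hS'int]
    have hsub : {ω | 0 < S 0 ω} ⊆ Function.support (S' 0) := by
      intro ω hω
      have h : (0:ℝ) < min (max (S 0 ω) 0) 1 :=
        lt_min (lt_max_iff.mpr (Or.inl (hω : (0:ℝ) < S 0 ω))) one_pos
      exact ne_of_gt h
    have hle : μ {ω | S 0 ω ≤ 0} = 0 := by
      have hdec : {ω | S 0 ω ≤ 0} ⊆ (S 0 ⁻¹' Set.Iio 0) ∪ (S 0 ⁻¹' {0}) := by
        intro ω hω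
        have hω' : S 0 ω ≤ 0 := hω
        rcases hω'.lt_or_eq with h | h
        · exact Or.inl h
        · exact Or.inr h
      refine le_antisymm (le_trans (measure_mono hdec) ?_) (zero_le (α := ENNReal))
      refine le_trans (measure_union_le _ _) ?_
      have h2 : μ (S 0 ⁻¹' {0}) = 0 := by
        rw [← Measure.map_apply (hSmeas 0) (measurableSet_singleton 0), hSlaw 0]
        exact withDensity_absolutelyContinuous _ _ (Real.volume_singleton)
      rw [hIio 0, h2]; simp
    have huniv : (1 : ENNReal) ≤ μ {ω | 0 < S 0 ω} := by
      have hcover : (Set.univ : Set Ω) ⊆ {ω | 0 < S 0 ω} ∪ {ω | S 0 ω ≤ 0} := by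
        intro ω _
        rcases lt_or_ge 0 (S 0 ω) with h | h
        · exact Or.inl h
        · exact Or.inr h
      calc (1 : ENNReal) = μ Set.univ := (measure_univ).symm
        _ ≤ μ ({ω | 0 < S 0 ω} ∪ {ω | S 0 ω ≤ 0}) := measure_mono hcover
        _ ≤ μ {ω | 0 < S 0 ω} + μ {ω | S 0 ω ≤ 0} := measure_union_le _ _
        _ = μ {ω | 0 < S 0 ω} := by rw [hle, add_zero]
    exact lt_of_lt_of_le (by norm_num) (le_trans huniv (measure_mono hsub))
  -- strong law of large numbers for S'
  have hSLLN : ∀ᵐ ω ∂μ, Tendsto (fun n : ℕ => (∑ i ∈ Finset.range n, S' i ω) / n)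
      atTop (𝓝 m) := strong_law_ae_real S' hS'int hS'indep hS'ident
  -- Borel-Cantelli for log N
  set ε : ℝ := c * m / 4 with hε
  have hεpos : 0 < ε := by positivity
  have hNae : ∀ᵐ ω ∂μ, ∀ᶠ (j : ℕ) in atTop,
      ¬ ((fun x => Real.log (N j x)) ω ∈ Set.Ioi ((j : ℝ) * ε)) := by
    apply ae_eventually_notMem (s := fun j => (fun x => Real.log (N j x)) ⁻¹' Set.Ioi ((j:ℝ)*ε))
    set Y : Ω → ℝ := fun ω => max (Real.log (N 0 ω) / ε) 0 with hY
    have hYint : Integrable Y μ := (hNint.div_const ε).pos_part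
    have hYnonneg : 0 ≤ Y := fun ω => le_max_right _ _
    letI : MeasureSpace Ω := ⟨μ⟩
    haveI : IsProbabilityMeasure (volume : Measure Ω) := ‹IsProbabilityMeasure μ›
    have htsum := tsum_prob_mem_Ioi_lt_top (X := Y) hYint hYnonneg
    refine ne_of_lt (lt_of_le_of_lt (ENNReal.tsum_le_tsum fun j => ?_) htsum)
    have heq : μ ((fun x => Real.log (N j x)) ⁻¹' Set.Ioi ((j:ℝ)*ε))
        = μ ((fun x => Real.log (N 0 x)) ⁻¹' Set.Ioi ((j:ℝ)*ε)) :=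
      ((hNident j).comp Real.measurable_log).measure_mem_eq measurableSet_Ioi
    rw [heq]
    refine measure_mono fun ω hω => ?_
    have h1 : (j : ℝ) * ε < Real.log (N 0 ω) := hω
    have h2 : (j : ℝ) < Real.log (N 0 ω) / ε := by
      rw [lt_div_iff₀ hεpos]; linarith [mul_comm (j : ℝ) ε]
    exact Set.mem_setOf.mpr (lt_of_lt_of_le h2 (le_max_left _ _))
  -- combine everything
  filter_upwards [hSLLN, hNae, ae_all_iff.mpr hSnonneg] with ω hten hNev hpos
  -- eventually the partial sums grow linearly
  have hev1 : ∀ᶠ n : ℕ in atTop, m / 2 < (∑ i ∈ Finset.range n, S' i ω) / n :=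
    hten.eventually (eventually_gt_nhds (by linarith))
  have hev2 : ∀ᶠ i : ℕ in atTop,
      m / 2 < (∑ k ∈ Finset.range (i+1), S' k ω) / ((i+1 : ℕ) : ℝ) :=
    (tendsto_add_atTop_nat 1).eventually hev1
  have hev3 : ∀ᶠ i : ℕ in atTop,
      N i ω * Real.exp (-(c * T i ω)) ≤ Real.exp ((i : ℝ) * (-(c * m / 4))) := by
    filter_upwards [hev2, hNev] with i hi hNi
    have hNpos : 0 < N i ω := lt_of_lt_of_le one_pos (hNge i ω)
    have hlog : Real.log (N i ω) ≤ (i : ℝ) * ε := not_lt.mp hNi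
    have hsum : (m / 2) * (((i+1 : ℕ)) : ℝ) ≤ ∑ k ∈ Finset.range (i+1), S' k ω := by
      have hpos' : (0:ℝ) < ((i+1 : ℕ) : ℝ) := Nat.cast_pos.mpr (Nat.succ_pos i)
      rw [lt_div_iff₀ hpos'] at hi
      exact hi.le
    have hTS : ∑ k ∈ Finset.range (i+1), S' k ω ≤ T i ω := by
      rw [hT i ω]
      exact Finset.sum_le_sum fun k _ => hφle _ (hpos k)
    have hTlb : (m / 2) * (i : ℝ) ≤ T i ω := by
      have h1 : (m / 2) * (i : ℝ) ≤ (m / 2) * ((i+1 : ℕ) : ℝ) := by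
        push_cast
        nlinarith [hmpos]
      linarith
    have hexp : Real.log (N i ω) - c * T i ω ≤ (i : ℝ) * (-(c * m / 4)) := by
      have h1 : c * ((m / 2) * (i : ℝ)) ≤ c * T i ω :=
        mul_le_mul_of_nonneg_left hTlb hc.le
      rw [hε] at hlog
      nlinarith
    calc N i ω * Real.exp (-(c * T i ω))
        = Real.exp (Real.log (N i ω)) * Real.exp (-(c * T i ω)) := by
          rw [Real.exp_log hNpos]
      _ = Real.exp (Real.log (N i ω) + -(c * T i ω)) := (Real.exp_add _ _).symm
      _ ≤ Real.exp ((i : ℝ) * (-(c * m / 4))) := Real.exp_le_exp.mpr (by linarith)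
  -- conclude summability by comparison with a geometric series
  obtain ⟨K, hK⟩ := eventually_atTop.mp hev3
  have hgeo : Summable (fun n : ℕ => Real.exp ((n : ℝ) * (-(c * m / 4)))) :=
    Real.summable_exp_nat_mul_iff.mpr (by nlinarith)
  refine (summable_nat_add_iff (f := fun i : ℕ => N i ω * Real.exp (-(c * T i ω))) K).mp ?_
  refine Summable.of_nonneg_of_le (fun n => ?_) (fun n => hK (n + K) (by omega)) ?_
  · have : 0 < N (n + K) ω := lt_of_lt_of_le one_pos (hNge _ ω)
    positivity
  · exact (summable_nat_add_iff K).mpr hgeo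
end

section
/- Let B̄ > 0 and c > 0. Let (S_k)_{k ∈ ℕ} be a sequence of independent, identically distributed random variables, each exponentially distributed with rate B̄ (i.e. with law having density s ↦ B̄ e^{−B̄ s} on [0,∞) with respect to Lebesgue measure), and set T_n := Σ_{k=0}^{n} S_k. Let (N_n)_{n ∈ ℕ} be a sequence of independent, identically distributed random variables on the same probability space, each taking values in [1, ∞), with E[log N_0] = ∞. Then almost surely limsup_{n→∞} N_n e^{−c T_n} = ∞. -/
open MeasureTheory Filter ProbabilityTheory
open scoped ENNReal Topology

lemma aux_exp_integrable (Bbar : ℝ) (hB : 0 < Bbar) :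
    Integrable (fun x : ℝ => x * (if 0 ≤ x then Bbar * Real.exp (-(Bbar * x)) else 0)) volume := by
  have hrw : (fun x : ℝ => x * (if 0 ≤ x then Bbar * Real.exp (-(Bbar * x)) else 0)) =
      Set.indicator (Set.Ici (0:ℝ)) (fun x => x * (Bbar * Real.exp (-(Bbar * x)))) := by
    funext x
    by_cases h : (0:ℝ) ≤ x <;> simp [Set.indicator, h]
  rw [hrw, integrable_indicator_iff measurableSet_Ici]
  rw [integrableOn_Ici_iff_integrableOn_Ioi]
  have h1 : IntegrableOn (fun x : ℝ => Real.exp (-x) * x) (Set.Ioi 0) := by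
    have h := Real.GammaIntegral_convergent (s := 2) (by norm_num)
    have : ∀ x : ℝ, Real.exp (-x) * x ^ ((2:ℝ) - 1) = Real.exp (-x) * x := by
      intro x; norm_num
    simpa [this] using h
  have h2 : IntegrableOn (fun x : ℝ => Real.exp (-(Bbar * x)) * (Bbar * x)) (Set.Ioi 0) := by
    have := (integrableOn_Ioi_comp_mul_left_iff (fun x : ℝ => Real.exp (-x) * x) 0 hB).mpr
      (by simpa using h1)
    simpa using this
  exact h2.congr_fun (fun x _ => by ring) measurableSet_Ioi

lemma aux_tail_div {Ω : Type*} [MeasurableSpace Ω] (μ : Measure Ω) [IsProbabilityMeasure μ]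
    (Y : Ω → ℝ) (hY : Measurable Y) (hY0 : ∀ ω, 0 ≤ Y ω)
    (hNint : ¬ Integrable Y μ) (M : ℕ) (hM : M ≠ 0) :
    ∑' k : ℕ, μ {ω | ((M * k : ℕ) : ℝ) < Y ω} = ⊤ := by
  haveI : NeZero M := ⟨hM⟩
  set g : ℕ → ℝ≥0∞ := fun j => μ {ω | (j : ℝ) < Y ω} with hgdef
  have hms : ∀ j : ℕ, MeasurableSet {ω | (j : ℝ) < Y ω} := fun j =>
    measurableSet_lt measurable_const hY
  have hg : ∀ {a b : ℕ}, a ≤ b → g b ≤ g a := by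
    intro a b hab
    apply measure_mono
    intro ω hω
    simp only [Set.mem_setOf_eq] at hω ⊢
    exact lt_of_le_of_lt (by exact_mod_cast hab) hω
  -- total series diverges
  have htot : ∑' j : ℕ, g j = ⊤ := by
    by_contra h
    apply hNint
    refine ⟨hY.aestronglyMeasurable, ?_⟩
    rw [hasFiniteIntegral_iff_norm]
    have hle : ∫⁻ ω, ENNReal.ofReal ‖Y ω‖ ∂μ ≤ ∑' j : ℕ, g j := by
      have hpt : ∀ ω, ENNReal.ofReal ‖Y ω‖ ≤
          ∑' j : ℕ, Set.indicator {ω' | (j : ℝ) < Y ω'} (fun _ => (1:ℝ≥0∞)) ω := by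
        intro ω
        rw [Real.norm_of_nonneg (hY0 ω)]
        calc ENNReal.ofReal (Y ω) ≤ ((⌈Y ω⌉₊ : ℕ) : ℝ≥0∞) := by
              rw [← ENNReal.ofReal_natCast]
              exact ENNReal.ofReal_le_ofReal (Nat.le_ceil _)
          _ = ∑ j ∈ Finset.range ⌈Y ω⌉₊,
                Set.indicator {ω' | (j : ℝ) < Y ω'} (fun _ => (1:ℝ≥0∞)) ω := by
              have hone : ∀ j ∈ Finset.range ⌈Y ω⌉₊,
                  Set.indicator {ω' | (j : ℝ) < Y ω'} (fun _ => (1:ℝ≥0∞)) ω = 1 := fun j hj =>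
                Set.indicator_of_mem
                  (show ω ∈ {ω' | (j : ℝ) < Y ω'} from Nat.lt_ceil.mp (Finset.mem_range.mp hj)) _
              rw [Finset.sum_congr rfl hone, Finset.sum_const, Finset.card_range,
                nsmul_eq_mul, mul_one]
          _ ≤ _ := ENNReal.sum_le_tsum _
      calc ∫⁻ ω, ENNReal.ofReal ‖Y ω‖ ∂μ
          ≤ ∫⁻ ω, ∑' j : ℕ, Set.indicator {ω' | (j : ℝ) < Y ω'} (fun _ => (1:ℝ≥0∞)) ω ∂μ :=
            lintegral_mono hpt
        _ = ∑' j : ℕ, ∫⁻ ω, Set.indicator {ω' | (j : ℝ) < Y ω'} (fun _ => (1:ℝ≥0∞)) ω ∂μ :=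
            lintegral_tsum (fun j => ((measurable_const.indicator (hms j)).aemeasurable))
        _ = ∑' j : ℕ, g j := by
            refine tsum_congr (fun j => ?_)
            exact lintegral_indicator_one (μ := μ) (hms j)
    exact lt_of_le_of_lt hle (lt_top_iff_ne_top.2 h)
  -- compare with spaced subsequence
  have key : ∑' j : ℕ, g j ≤ (M : ℝ≥0∞) * ∑' k : ℕ, g (M * k) := by
    have e1 : ∑' p : ℕ × Fin M, g ((Nat.divModEquiv M).symm p) = ∑' j : ℕ, g j :=
      Equiv.tsum_eq _ _
    rw [← e1]
    have e2 : ∀ p : ℕ × Fin M, g ((Nat.divModEquiv M).symm p) ≤ g (M * p.1) := by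
      intro p
      refine hg ?_
      simp only [Nat.divModEquiv_symm_apply]
      rw [mul_comm]
      exact Nat.le_add_right _ _
    calc ∑' p : ℕ × Fin M, g ((Nat.divModEquiv M).symm p)
        ≤ ∑' p : ℕ × Fin M, g (M * p.1) := ENNReal.tsum_le_tsum e2
      _ = ∑' k : ℕ, ∑' q : Fin M, g (M * k) :=
          ENNReal.tsum_prod (f := fun (k : ℕ) (_ : Fin M) => g (M * k))
      _ = ∑' k : ℕ, (M : ℝ≥0∞) * g (M * k) := by
          refine tsum_congr (fun k => ?_)
          simp [tsum_fintype, Finset.sum_const, Finset.card_univ, mul_comm]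
      _ = (M : ℝ≥0∞) * ∑' k : ℕ, g (M * k) := ENNReal.tsum_mul_left
  by_contra h
  have h1 : (M : ℝ≥0∞) * ∑' k : ℕ, g (M * k) ≠ ⊤ :=
    ENNReal.mul_ne_top (ENNReal.natCast_ne_top M) h
  exact h1 (top_le_iff.mp (htot ▸ key))

/-- let `(S k)` be i.i.d. exponential random variables of rate `B̄ > 0`,
`T n := ∑_{k=0}^{n} S k`, and let `(N n)` be i.i.d. `[1,∞)`-valued random variables on
the same probability space with `E[log N₀] = ∞` (i.e. `log N₀` not integrable).  Then
for every `c > 0`, almost surely `limsup_n N n * exp (-c * T n) = ∞`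
(as an extended-real-valued limsup). -/
theorem limsup_biased_immigration_eq_top
    {Ω : Type*} [MeasurableSpace Ω] (μ : Measure Ω) [IsProbabilityMeasure μ]
    (Bbar c : ℝ) (hB : 0 < Bbar) (hc : 0 < c)
    (S : ℕ → Ω → ℝ)
    (hSmeas : ∀ k, Measurable (S k))
    (hSindep : iIndepFun S μ)
    (hSlaw : ∀ k, Measure.map (S k) μ =
      (volume : Measure ℝ).withDensity
        (fun s => ENNReal.ofReal (if 0 ≤ s then Bbar * Real.exp (-(Bbar * s)) else 0)))
    (T : ℕ → Ω → ℝ)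
    (hT : ∀ n ω, T n ω = ∑ k ∈ Finset.range (n + 1), S k ω)
    (N : ℕ → Ω → ℝ)
    (hNmeas : ∀ n, Measurable (N n))
    (hNindep : iIndepFun N μ)
    (hNident : ∀ n, IdentDistrib (N n) (N 0) μ μ)
    (hNge : ∀ n ω, 1 ≤ N n ω)
    (hNnotint : ¬ Integrable (fun ω => Real.log (N 0 ω)) μ) :
    ∀ᵐ ω ∂μ,
      Filter.limsup (fun n : ℕ => ((N n ω * Real.exp (-(c * T n ω)) : ℝ) : EReal))
        Filter.atTop = ⊤ := by
  classical
  -- the `S k` are identically distributed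
  have hSident : ∀ k, IdentDistrib (S k) (S 0) μ μ := fun k =>
    ⟨(hSmeas k).aemeasurable, (hSmeas 0).aemeasurable, by rw [hSlaw k, hSlaw 0]⟩
  -- integrability of `S 0`
  set f : ℝ → ℝ≥0∞ :=
    fun s => ENNReal.ofReal (if 0 ≤ s then Bbar * Real.exp (-(Bbar * s)) else 0) with hfdef
  have hfmeas : Measurable f := by
    apply Measurable.ennreal_ofReal
    exact Measurable.ite (measurableSet_le measurable_const measurable_id)
      (measurable_const.mul ((measurable_id.const_mul Bbar).neg.exp)) measurable_const
  have hintS : Integrable (S 0) μ := by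
    have h1 : Integrable (fun x : ℝ => id x * (f x).toReal) volume := by
      refine (aux_exp_integrable Bbar hB).congr ?_
      refine ae_of_all _ (fun x => ?_)
      simp only [hfdef, id]
      rw [ENNReal.toReal_ofReal (by split <;> positivity)]
    have h2 : Integrable id ((volume : Measure ℝ).withDensity f) :=
      (integrable_withDensity_iff hfmeas (ae_of_all _ fun x => ENNReal.ofReal_lt_top)).mpr h1
    rw [← hSlaw 0] at h2
    exact (integrable_map_measure aestronglyMeasurable_id (hSmeas 0).aemeasurable).mp h2
  -- strong law of large numbers
  have hpair : Pairwise (Function.onFun (IndepFun · · μ) S) := fun i j hij => hSindep.indepFun hij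
  have hSLLN := strong_law_ae_real S hintS hpair hSident
  set m : ℝ := μ[S 0] with hmdef
  set M : ℕ := ⌈2 * c * (|m| + 1)⌉₊ + 1 with hMdef
  have hMge : 2 * c * (|m| + 1) + 1 ≤ (M : ℝ) := by
    have := Nat.le_ceil (2 * c * (|m| + 1))
    rw [hMdef]
    push_cast
    linarith
  -- a.s. linear growth bound on `T`
  have hgrow : ∀ᵐ ω ∂μ, ∀ᶠ n : ℕ in atTop, c * T n ω ≤ ((M : ℝ) - 1) * n := by
    filter_upwards [hSLLN] with ω hω
    have h1 : Tendsto (fun n : ℕ => (∑ i ∈ Finset.range (n+1), S i ω) / ((n:ℝ)+1))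
        atTop (𝓝 m) := by
      have h := hω.comp (tendsto_add_atTop_nat 1)
      refine h.congr (fun n => ?_)
      simp only [Function.comp_apply]
      push_cast
      ring
    have h2 : ∀ᶠ n : ℕ in atTop,
        (∑ i ∈ Finset.range (n+1), S i ω) / ((n:ℝ)+1) < |m| + 1 :=
      h1.eventually_lt_const (lt_of_le_of_lt (le_abs_self _) (lt_add_one _))
    filter_upwards [h2, eventually_ge_atTop 1] with n hn hn1
    rw [hT]
    have hpos : (0:ℝ) < (n:ℝ) + 1 := by positivity
    have hTlt : (∑ i ∈ Finset.range (n+1), S i ω) < (|m| + 1) * ((n:ℝ)+1) := by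
      rwa [div_lt_iff₀ hpos] at hn
    have hcast : (1:ℝ) ≤ (n:ℝ) := by exact_mod_cast hn1
    have habs : (0:ℝ) ≤ |m| := abs_nonneg m
    nlinarith [mul_le_mul_of_nonneg_left hTlt.le hc.le,
      mul_nonneg (mul_nonneg hc.le (by linarith : (0:ℝ) ≤ |m| + 1)) (by linarith : (0:ℝ) ≤ (n:ℝ) - 1)]
  -- Borel–Cantelli II for the events `N n > exp (M n)`
  haveI : NeZero M := ⟨Nat.succ_ne_zero _⟩
  set s : ℕ → Set Ω := fun n => N n ⁻¹' Set.Ioi (Real.exp ((M * n : ℕ) : ℝ)) with hsdef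
  have hsm : ∀ n, MeasurableSet (s n) := fun n => (hNmeas n) measurableSet_Ioi
  have hsum : ∑' n, μ (s n) = ⊤ := by
    have hident : ∀ n : ℕ, μ (s n) = μ {ω | ((M * n : ℕ) : ℝ) < Real.log (N 0 ω)} := by
      intro n
      rw [hsdef]
      simp only
      rw [(hNident n).measure_mem_eq measurableSet_Ioi]
      congr 1
      ext ω
      simp only [Set.mem_preimage, Set.mem_Ioi, Set.mem_setOf_eq]
      rw [Real.lt_log_iff_exp_lt (lt_of_lt_of_le one_pos (hNge 0 ω))]
    calc ∑' n, μ (s n) = ∑' n : ℕ, μ {ω | ((M * n : ℕ) : ℝ) < Real.log (N 0 ω)} :=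
          tsum_congr hident
      _ = ⊤ := aux_tail_div μ _ (Real.measurable_log.comp (hNmeas 0))
          (fun ω => Real.log_nonneg (hNge 0 ω)) hNnotint M (Nat.succ_ne_zero _)
  have hindepSet : iIndepSet s μ := by
    rw [iIndepSet_iff_meas_biInter hsm]
    intro t
    exact hNindep.measure_inter_preimage_eq_mul t
      (sets := fun i => Set.Ioi (Real.exp ((M * i : ℕ) : ℝ))) (fun i _ => measurableSet_Ioi)
  have hBC := measure_limsup_eq_one hsm hindepSet hsum
  have hae : ∀ᵐ ω ∂μ, ∃ᶠ n in atTop, ω ∈ s n := by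
    have h0 : μ (limsup s atTop)ᶜ = 0 :=
      (prob_compl_eq_zero_iff (MeasurableSet.measurableSet_limsup hsm)).mpr hBC
    have : ∀ᵐ ω ∂μ, ω ∈ limsup s atTop := by
      rw [ae_iff]
      simpa [Set.compl_def] using h0
    exact this.mono (fun ω hω => mem_limsup_iff_frequently_mem.mp hω)
  -- combine
  filter_upwards [hgrow, hae] with ω h1 h2
  rw [EReal.eq_top_iff_forall_lt]
  intro y
  have hfreq : ∃ᶠ n in atTop,
      ((y + 1 : ℝ) : EReal) ≤ ((N n ω * Real.exp (-(c * T n ω)) : ℝ) : EReal) := by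
    refine (h2.and_eventually (h1.and (eventually_ge_atTop ⌈y + 1⌉₊))).mono ?_
    rintro n ⟨hsn, hTn, hny⟩
    rw [EReal.coe_le_coe_iff]
    have hN : Real.exp ((M * n : ℕ) : ℝ) < N n ω := hsn
    have hyn : (y + 1 : ℝ) ≤ (n : ℝ) :=
      le_trans (Nat.le_ceil _) (by exact_mod_cast hny)
    have e1 : Real.exp (((M * n : ℕ) : ℝ)) * Real.exp (-(((M : ℝ) - 1) * n))
        = Real.exp (n : ℝ) := by
      rw [← Real.exp_add]
      congr 1
      push_cast
      ring
    calc (y + 1 : ℝ) ≤ (n : ℝ) := hyn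
      _ ≤ Real.exp (n : ℝ) := by linarith [Real.add_one_le_exp (n : ℝ)]
      _ = Real.exp (((M * n : ℕ) : ℝ)) * Real.exp (-(((M : ℝ) - 1) * n)) := e1.symm
      _ ≤ Real.exp (((M * n : ℕ) : ℝ)) * Real.exp (-(c * T n ω)) := by
          exact mul_le_mul_of_nonneg_left (Real.exp_le_exp.mpr (by linarith)) (Real.exp_pos _).le
      _ ≤ N n ω * Real.exp (-(c * T n ω)) :=
          mul_le_mul_of_nonneg_right hN.le (Real.exp_pos _).le
  calc ((y : ℝ) : EReal) < ((y + 1 : ℝ) : EReal) := by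
        exact_mod_cast lt_add_one y
    _ ≤ _ := le_limsup_of_frequently_le' hfreq
end
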